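/- arXiv:2009.13447 — 3 statements merged into one kernel-verified Lean document; each statement's English description precedes it below -/
import Mathlib

section
/- Let 0 < a1, a2, f1, f2 with a1 + a2 = 1 and f1 + f2 = 1, and η > 0. The reweighting stability condition (1 - η a2)^2 + η^2 f1 f2 (a2/f2)^2 ≤ 1 is equivalent to η a2 (1 + f1/f2) ≤ 2, i.e. η (a2/f2) ≤ 2. -/
/-! With `x = η a2` and `f1 = 1 - f2`, the second-moment factor is
`(1 - x)^2 + x^2 (f1/f2) = 1 - x (2 - x / f2)`, so for `x > 0` it is at most `1`
exactly when `x / f2 ≤ 2`. -/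

theorem one_sub_sq_add_sq_mul_le_one_iff {α : Type*} [Field α] [LinearOrder α]
    [IsStrictOrderedRing α] {x c : α} (hx : 0 < x) :
    (1 - x) ^ 2 + x ^ 2 * c ≤ 1 ↔ x * (1 + c) ≤ 2 := by
  have factor : (1 - x) ^ 2 + x ^ 2 * c - 1 = x * (x * (1 + c) - 2) := by ring
  rw [← sub_nonpos, factor, ← mul_zero x, mul_le_mul_iff_right₀ hx, sub_nonpos]

theorem reweighting_stability_iff_general
    (a2 f1 f2 η : ℝ) (ha2 : 0 < a2) (hf2 : 0 < f2)
    (hsf : f1 + f2 = 1) (hη : 0 < η) :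
    ((1 - η * a2) ^ 2 + η ^ 2 * (f1 * f2 * (a2 / f2) ^ 2) ≤ 1 ↔
      η * a2 * (1 + f1 / f2) ≤ 2) ∧
    ((1 - η * a2) ^ 2 + η ^ 2 * (f1 * f2 * (a2 / f2) ^ 2) ≤ 1 ↔
      η * (a2 / f2) ≤ 2) := by
  have noise : η ^ 2 * (f1 * f2 * (a2 / f2) ^ 2) = (η * a2) ^ 2 * (f1 / f2) := by
    field_simp
  have stable_iff := one_sub_sq_add_sq_mul_le_one_iff (c := f1 / f2) (mul_pos hη ha2)
  have reweighted_rate : η * a2 * (1 + f1 / f2) = η * (a2 / f2) := by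
    obtain rfl : f1 = 1 - f2 := eq_sub_of_add_eq hsf
    field_simp
    ring
  rw [noise]
  exact ⟨stable_iff, reweighted_rate ▸ stable_iff⟩

/-- Reweighting stability: for positive `a1, a2, f1, f2` with `a1 + a2 = 1`,
`f1 + f2 = 1` and `η > 0`, the condition
`(1 - η a2)^2 + η^2 f1 f2 (a2/f2)^2 ≤ 1` is equivalent to
`η a2 (1 + f1/f2) ≤ 2`, i.e. to `η (a2/f2) ≤ 2`. -/
theorem reweighting_stability_iff
    (a1 a2 f1 f2 η : ℝ) (ha1 : 0 < a1) (ha2 : 0 < a2) (hf1 : 0 < f1) (hf2 : 0 < f2)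
    (hsa : a1 + a2 = 1) (hsf : f1 + f2 = 1) (hη : 0 < η) :
    ((1 - η * a2) ^ 2 + η ^ 2 * (f1 * f2 * (a2 / f2) ^ 2) ≤ 1 ↔
      η * a2 * (1 + f1 / f2) ≤ 2) ∧
    ((1 - η * a2) ^ 2 + η ^ 2 * (f1 * f2 * (a2 / f2) ^ 2) ≤ 1 ↔
      η * (a2 / f2) ≤ 2) :=
  reweighting_stability_iff_general a2 f1 f2 η ha2 hf2 hsf hη
end

section
/- Let 0 < a1 < a2 with a1 + a2 = 1, let f1 + f2 = 1 with 0 < f2 < f1, and let η satisfy η (a2/f2) > 2 and η (a1/f1) ≤ 2 - η f2 a1^2/(f1^2) (equivalently η a1 (1 + f2/f1) ≤ 2). Then the reweighting stability condition holds at the non-global minimizer (group 1) but fails at the global minimizer (group 2). -/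
/-! With the reweighted step `x = η a / f`, the stability quantity minus one factors as
`f x (x - 2)` once `g = 1 - f`, so stability at a group means exactly `0 ≤ x ≤ 2`.
For group 1 the hypothesis reads `x₁ = η a₁ (1 + f₂/f₁) ≤ 2`; for group 2 it reads `x₂ > 2`. -/

section ReweightedStability

variable {η a f g : ℝ}

theorem reweighted_stability_sub_one (hf : f ≠ 0) (hfg : f + g = 1) :
    (1 - η * a) ^ 2 + η ^ 2 * (f * g * (a / f) ^ 2) - 1 = f * (η * a / f * (η * a / f - 2)) := by
  obtain rfl : g = 1 - f := by linarith
  field_simp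
  ring

theorem reweighted_stable_iff (hf : 0 < f) (hfg : f + g = 1) :
    (1 - η * a) ^ 2 + η ^ 2 * (f * g * (a / f) ^ 2) ≤ 1 ↔ 0 ≤ η * a / f ∧ η * a / f ≤ 2 := by
  rw [← sub_nonpos, reweighted_stability_sub_one hf.ne' hfg]
  simpa only [mul_zero, sub_zero] using
    (mul_le_mul_iff_of_pos_left (c := 0) hf).trans (sub_mul_sub_nonpos_iff _ zero_le_two)

end ReweightedStability

theorem reweighting_wrong_minimizer_stable_general
    (a1 a2 f1 f2 η : ℝ) (ha1 : 0 < a1)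
    (hf2 : 0 < f2) (hf : f2 < f1) (hsf : f1 + f2 = 1) (hη : 0 < η)
    (hbad : η * (a2 / f2) > 2) (hgood : η * a1 * (1 + f2 / f1) ≤ 2) :
    (1 - η * a1) ^ 2 + η ^ 2 * (f1 * f2 * (a1 / f1) ^ 2) ≤ 1 ∧
    ¬ ((1 - η * a2) ^ 2 + η ^ 2 * (f1 * f2 * (a2 / f2) ^ 2) ≤ 1) := by
  have hf1 : 0 < f1 := hf2.trans hf
  have hstep1 : η * a1 / f1 ≤ 2 := by
    convert hgood using 1
    field_simp
    linarith
  have hstep2 : 2 < η * a2 / f2 := by rwa [mul_div_assoc]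
  rw [reweighted_stable_iff hf1 hsf, mul_comm f1 f2, reweighted_stable_iff hf2 (by linarith)]
  exact ⟨⟨by positivity, hstep1⟩, fun h => hstep2.not_ge h.2⟩

/-- If `η (a2/f2) > 2` while `η a1 (1 + f2/f1) ≤ 2`, then the reweighting
stability condition holds at the non-global minimizer (group 1) but fails at
the global minimizer (group 2). -/
theorem reweighting_wrong_minimizer_stable
    (a1 a2 f1 f2 η : ℝ) (ha1 : 0 < a1) (ha : a1 < a2) (hsa : a1 + a2 = 1)
    (hf2 : 0 < f2) (hf : f2 < f1) (hsf : f1 + f2 = 1) (hη : 0 < η)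
    (hbad : η * (a2 / f2) > 2) (hgood : η * a1 * (1 + f2 / f1) ≤ 2) :
    (1 - η * a1) ^ 2 + η ^ 2 * (f1 * f2 * (a1 / f1) ^ 2) ≤ 1 ∧
    ¬ ((1 - η * a2) ^ 2 + η ^ 2 * (f1 * f2 * (a2 / f2) ^ 2) ≤ 1) :=
  reweighting_wrong_minimizer_stable_general a1 a2 f1 f2 η ha1 hf2 hf hsf hη hbad hgood
end

section
/- Let a1, a2, f1, f2 ∈ (0,1) with a1 + a2 = 1, f1 + f2 = 1, a2 > a1, and let V(1) < V(−1) < 0. If f2/f1 ≤ (a2/a1)·√(V(−1)/V(1)), then (a1²/f1²)/(a2²/f2²) · exp(−(2 f2/f1)/(a2² η) · V(1) + (2 f1/f2)/(a1² η) · V(−1)) < 1 for every η > 0. -/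
/-!
Write `q = (a1/a2)(f2/f1)` and `r = V(-1)/V(1) ∈ (0, 1)`. The prefactor is `q²`, and the
hypothesis says `q ≤ √r`, i.e. `q² ≤ r < 1`. Factoring `(2 f1/f2)(-V(1))/(a1² η) > 0` out of the
exponent leaves `q² - r ≤ 0`, so the exponential is at most `1` and the product is below `1`.
-/

open Real

theorem sq_mul_exp_mul_sub_lt_one {q r c : ℝ} (hq : 0 < q) (hqr : q ≤ √r) (hr : r < 1)
    (hc : 0 ≤ c) : q ^ 2 * exp (c * (q ^ 2 - r)) < 1 := by
  have hsq : q ^ 2 ≤ r := (Real.le_sqrt' hq).mp hqr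
  have hexp : exp (c * (q ^ 2 - r)) ≤ 1 :=
    exp_le_one_iff.mpr (mul_nonpos_of_nonneg_of_nonpos hc (by linarith))
  calc q ^ 2 * exp (c * (q ^ 2 - r)) ≤ q ^ 2 * 1 := by gcongr
    _ < 1 := by linarith

section StationaryRatio

variable {a1 a2 f1 f2 : ℝ}

theorem stationary_prefactor_eq (hf1 : f1 ≠ 0) (ha2 : a2 ≠ 0) :
    (a1 ^ 2 / f1 ^ 2) / (a2 ^ 2 / f2 ^ 2) = (a1 / a2 * (f2 / f1)) ^ 2 := by
  field_simp

theorem stationary_exponent_eq (ha1 : a1 ≠ 0) (ha2 : a2 ≠ 0) (hf1 : f1 ≠ 0) (hf2 : f2 ≠ 0)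
    {v1 : ℝ} (hv1 : v1 ≠ 0) (vm1 η : ℝ) :
    -(2 * (f2 / f1)) / (a2 ^ 2 * η) * v1 + (2 * (f1 / f2)) / (a1 ^ 2 * η) * vm1 =
      2 * (f1 / f2) * -v1 / (a1 ^ 2 * η) * ((a1 / a2 * (f2 / f1)) ^ 2 - vm1 / v1) := by
  field_simp
  ring

theorem le_sqrt_of_div_le_mul_sqrt (ha1 : 0 < a1) (ha2 : 0 < a2) {r : ℝ}
    (h : f2 / f1 ≤ a2 / a1 * √r) : a1 / a2 * (f2 / f1) ≤ √r := by
  calc a1 / a2 * (f2 / f1) ≤ a1 / a2 * (a2 / a1 * √r) := by gcongr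
    _ = √r := by field_simp

end StationaryRatio

theorem reweighting_stationary_ratio_lt_one_general
    (a1 a2 f1 f2 v1 vm1 : ℝ)
    (ha1 : 0 < a1) (ha2 : 0 < a2)
    (hf1 : 0 < f1) (hf2 : 0 < f2)
    (hv : v1 < vm1) (hv0 : vm1 < 0)
    (hcond : f2 / f1 ≤ (a2 / a1) * Real.sqrt (vm1 / v1)) :
    ∀ η : ℝ, 0 < η →
      (a1 ^ 2 / f1 ^ 2) / (a2 ^ 2 / f2 ^ 2) *
        Real.exp (-(2 * (f2 / f1)) / (a2 ^ 2 * η) * v1 +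
          (2 * (f1 / f2)) / (a1 ^ 2 * η) * vm1) < 1 := by
  intro η hη
  have hv1 : v1 < 0 := hv.trans hv0
  rw [stationary_prefactor_eq hf1.ne' ha2.ne',
    stationary_exponent_eq ha1.ne' ha2.ne' hf1.ne' hf2.ne' hv1.ne]
  refine sq_mul_exp_mul_sub_lt_one (by positivity)
    (le_sqrt_of_div_le_mul_sqrt ha1 ha2 hcond) ((div_lt_one_of_neg hv1).mpr hv) ?_
  have : 0 < -v1 := neg_pos.mpr hv1
  positivity

/-- Reweighting stationary ratio is below one: under
`f2/f1 ≤ (a2/a1)√(V(-1)/V(1))` with `V(1) < V(-1) < 0`, the quantity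
`(a1²/f1²)/(a2²/f2²) · exp(-(2f2/f1)/(a2²η) V(1) + (2f1/f2)/(a1²η) V(-1))`
is `< 1` for every `η > 0`. Here `v1 = V(1)` and `vm1 = V(-1)`. -/
theorem reweighting_stationary_ratio_lt_one
    (a1 a2 f1 f2 v1 vm1 : ℝ)
    (ha1 : 0 < a1) (ha1' : a1 < 1) (ha2 : 0 < a2) (ha2' : a2 < 1)
    (hf1 : 0 < f1) (hf1' : f1 < 1) (hf2 : 0 < f2) (hf2' : f2 < 1)
    (hsa : a1 + a2 = 1) (hsf : f1 + f2 = 1) (ha : a1 < a2)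
    (hv : v1 < vm1) (hv0 : vm1 < 0)
    (hcond : f2 / f1 ≤ (a2 / a1) * Real.sqrt (vm1 / v1)) :
    ∀ η : ℝ, 0 < η →
      (a1 ^ 2 / f1 ^ 2) / (a2 ^ 2 / f2 ^ 2) *
        Real.exp (-(2 * (f2 / f1)) / (a2 ^ 2 * η) * v1 +
          (2 * (f1 / f2)) / (a1 ^ 2 * η) * vm1) < 1 :=
  reweighting_stationary_ratio_lt_one_general a1 a2 f1 f2 v1 vm1 ha1 ha2 hf1 hf2 hv hv0 hcond
end
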